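/- With D_t, N as in Lemma 1 and Ĥ_t(K)^{-1} = D_t^{-1/2} ∑_{i=0}^{K} (D_t^{-1/2} N D_t^{-1/2})^i D_t^{-1/2}, it holds that ‖Ĥ_t(K)‖ ≤ M_f + ε + (1 + 2(n-1))/μ. -/

import Mathlib

open Matrix Kronecker Finset

/-- The positive semidefinite square root of a positive semidefinite matrix
(the definition `Matrix.PosSemidef.sqrt` of Mathlib, December 2024, since removed). -/
noncomputable def Matrix.PosSemidef.sqrt {n 𝕜 : Type*} [Fintype n] [DecidableEq n] [RCLike 𝕜]
    [PartialOrder 𝕜]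
    {A : Matrix n n 𝕜} (hA : A.PosSemidef) : Matrix n n 𝕜 :=
  hA.1.eigenvectorUnitary.1 * diagonal ((↑) ∘ (√·) ∘ hA.1.eigenvalues) *
  (star hA.1.eigenvectorUnitary : Matrix n n 𝕜)

/-!
Write `R = D^{1/2}` and `S = R⁻¹ N R⁻¹`. Since `N` is `μ⁻¹` times the signless Laplacian
(tensored with the identity), it is positive semidefinite, hence so are `S` and all its powers,
and `T = ∑_{i ≤ K} S^i ⪰ 1`. Therefore `Ĥ = (R⁻¹ T R⁻¹)⁻¹ = R T⁻¹ R` satisfies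
`0 ⪯ Ĥ ⪯ R R = D` in the Loewner order. Blockwise, `∇²f^i ⪯ M_f`, `E_ll ⪯ 1` and
`deg i ≤ n - 1` give `D ⪯ (M_f + ε + (1 + 2(n-1))/μ) • 1`, and a symmetric `0 ⪯ A ⪯ c • 1`
has operator norm at most `c`.
-/

open scoped MatrixOrder

section Loewner

open scoped ComplexOrder

lemma Units.inv_le_one_of_one_le {R : Type*} [Ring R] [StarRing R] [PartialOrder R]
    [StarOrderedRing R] {T : Rˣ} (hT : 1 ≤ (T : R)) : (↑T⁻¹ : R) ≤ 1 := by
  have hTsa : IsSelfAdjoint (T : R) := by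
    simpa using (IsSelfAdjoint.of_nonneg (sub_nonneg.2 hT)).add (.one R)
  have hTinvsa : IsSelfAdjoint (↑T⁻¹ : R) := by
    have : star T = T := Units.ext hTsa.star_eq
    rw [IsSelfAdjoint, ← Units.coe_star_inv, this]
  have key : 1 - (↑T⁻¹ : R) = ↑T⁻¹ * (star (T - 1 : R) * (T - 1) + (T - 1)) * ↑T⁻¹ := by
    rw [star_sub, hTsa.star_eq, star_one]
    simp only [mul_add, add_mul, mul_sub, sub_mul, mul_one, one_mul, Units.inv_mul]
    rw [← mul_assoc, Units.inv_mul, one_mul, Units.mul_inv]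
    abel
  rw [← sub_nonneg, key]
  exact hTinvsa.conjugate_nonneg (add_nonneg (star_mul_self_nonneg _) (sub_nonneg.2 hT))

namespace Matrix

variable {m n 𝕜 : Type*} [RCLike 𝕜]

lemma PosSemidef.sqrt_eq_cfcSqrt [Fintype n] [DecidableEq n] {A : Matrix n n 𝕜}
    (hA : A.PosSemidef) : hA.sqrt = CFC.sqrt A := by
  rw [CFC.sqrt_eq_real_sqrt A hA.nonneg, cfcₙ_eq_cfc, hA.1.cfc_eq, IsHermitian.cfc,
    Unitary.conjStarAlgAut_apply]
  rfl

lemma PosSemidef.sqrt_mul_self [Fintype n] [DecidableEq n] {A : Matrix n n 𝕜}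
    (hA : A.PosSemidef) : hA.sqrt * hA.sqrt = A :=
  hA.sqrt_eq_cfcSqrt ▸ CFC.sqrt_mul_sqrt_self A hA.nonneg

lemma PosSemidef.isHermitian_sqrt [Fintype n] [DecidableEq n] {A : Matrix n n 𝕜}
    (hA : A.PosSemidef) : hA.sqrt.IsHermitian :=
  hA.sqrt_eq_cfcSqrt ▸ (CFC.sqrt_nonneg A).posSemidef.1

lemma PosSemidef.isUnit_det_sqrt [Fintype n] [DecidableEq n] {A : Matrix n n 𝕜}
    (hA : A.PosSemidef) (hA' : A.PosDef) : IsUnit hA.sqrt.det :=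
  (isUnit_iff_isUnit_det _).1 <|
    hA.sqrt_eq_cfcSqrt ▸ (CFC.isUnit_sqrt_iff A hA.nonneg).2 hA'.isUnit

lemma posDef_of_smul_one_le [Fintype n] [DecidableEq n] {A : Matrix n n 𝕜} {c : 𝕜}
    (hc : 0 < c) (h : c • 1 ≤ A) : A.PosDef := by
  simpa using PosDef.posSemidef_add (le_iff.1 h) (PosDef.one.smul hc)

lemma inv_le_one_of_one_le [Fintype n] [DecidableEq n] {T : Matrix n n 𝕜} (hT : 1 ≤ T) :
    T⁻¹ ≤ 1 := by
  have hdet : IsUnit T.det :=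
    (isUnit_iff_isUnit_det T).1 (posDef_of_smul_one_le zero_lt_one (by simpa using hT)).isUnit
  exact Units.inv_le_one_of_one_le (T := T.nonsingInvUnit hdet) hT

lemma inv_conj_inv_mem_Icc [Fintype n] [DecidableEq n] {R T : Matrix n n 𝕜}
    (hR : R.IsHermitian) (hRdet : IsUnit R.det) (hT : 1 ≤ T) :
    (R⁻¹ * T * R⁻¹)⁻¹ ∈ Set.Icc 0 (R * R) := by
  have hTinv : 0 ≤ T⁻¹ := (zero_le_one.trans hT).posSemidef.inv.nonneg
  rw [mul_inv_rev, mul_inv_rev, nonsing_inv_nonsing_inv _ hRdet, ← mul_assoc]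
  refine ⟨hR.isSelfAdjoint.conjugate_nonneg hTinv, ?_⟩
  simpa using hR.isSelfAdjoint.conjugate_le_conjugate (inv_le_one_of_one_le hT)

lemma one_le_sum_range_pow [Fintype n] [DecidableEq n] {S : Matrix n n 𝕜} (hS : 0 ≤ S)
    (K : ℕ) : 1 ≤ ∑ i ∈ range (K + 1), S ^ i := by
  rw [sum_range_succ', pow_zero, le_add_iff_nonneg_left]
  exact sum_nonneg fun i _ => (hS.posSemidef.pow _).nonneg

lemma kronecker_le_kronecker_of_nonneg_left [Fintype m] [Fintype n] {A B : Matrix m m 𝕜}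
    {C : Matrix n n 𝕜} (h : A ≤ B) (hC : 0 ≤ C) : C ⊗ₖ A ≤ C ⊗ₖ B := by
  have : C ⊗ₖ B - C ⊗ₖ A = C ⊗ₖ (B - A) := by ext; simp [mul_sub]
  rw [le_iff, this]
  exact hC.posSemidef.kronecker (le_iff.1 h)

lemma kronecker_le_kronecker_of_nonneg_right [Fintype m] [Fintype n] {A B : Matrix m m 𝕜}
    {C : Matrix n n 𝕜} (h : A ≤ B) (hC : 0 ≤ C) : A ⊗ₖ C ≤ B ⊗ₖ C := by
  have : B ⊗ₖ C - A ⊗ₖ C = (B - A) ⊗ₖ C := by ext; simp [sub_mul]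
  rw [le_iff, this]
  exact (le_iff.1 h).kronecker hC.posSemidef

lemma diagonal_le_diagonal [DecidableEq n] {d e : n → 𝕜} (h : ∀ i, d i ≤ e i) :
    diagonal d ≤ diagonal e := by
  rw [le_iff, diagonal_sub]
  exact PosSemidef.diagonal fun i => sub_nonneg.2 (h i)

lemma single_one_nonneg [DecidableEq n] (i : n) : 0 ≤ single i i (1 : 𝕜) := by
  rw [← diagonal_single, ← diagonal_zero]
  exact diagonal_le_diagonal (Pi.single_nonneg.2 zero_le_one)

lemma single_one_le_one [DecidableEq n] (i : n) : single i i (1 : 𝕜) ≤ 1 := by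
  rw [← diagonal_single, ← diagonal_one]
  exact diagonal_le_diagonal fun j => by rw [Pi.single_apply]; split_ifs <;> simp

lemma of_ite_fst_eq_sum_single_kronecker [Fintype n] [DecidableEq n] (Q : n → Matrix m m 𝕜) :
    (of fun p q : n × m => if p.1 = q.1 then Q p.1 p.2 q.2 else 0) =
      ∑ i, single i i 1 ⊗ₖ Q i := by
  ext ⟨i, a⟩ ⟨j, b⟩
  simp [sum_apply, single_apply, ite_and]

lemma sum_single_kronecker_mono [Fintype m] [Fintype n] [DecidableEq n]
    {A B : n → Matrix m m 𝕜} (h : ∀ i, A i ≤ B i) :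
    ∑ i, single i i 1 ⊗ₖ A i ≤ ∑ i, single i i 1 ⊗ₖ B i :=
  sum_le_sum fun i _ => kronecker_le_kronecker_of_nonneg_left (h i) (single_one_nonneg i)

lemma sum_single_kronecker_smul_one [Fintype n] [DecidableEq m] [DecidableEq n] (c : 𝕜) :
    ∑ i : n, single i i 1 ⊗ₖ (c • 1 : Matrix m m 𝕜) = c • 1 := by
  ext ⟨i, a⟩ ⟨j, b⟩
  simp [sum_apply, single_apply, one_apply, ite_and]
  split_ifs <;> rfl

end Matrix

end Loewner

lemma Matrix.norm_toEuclideanCLM_le_of_nonneg_of_le {n : Type*} [Fintype n] [DecidableEq n]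
    {A : Matrix n n ℝ} {r : ℝ} (hr : 0 ≤ r) (hA : 0 ≤ A) (hAr : A ≤ r • 1) :
    ‖toEuclideanCLM (𝕜 := ℝ) A‖ ≤ r := by
  have hsymm : ((toEuclideanCLM (𝕜 := ℝ) A : EuclideanSpace ℝ n →L[ℝ] EuclideanSpace ℝ n) :
      EuclideanSpace ℝ n →ₗ[ℝ] EuclideanSpace ℝ n).IsSymmetric := by
    rw [coe_toEuclideanCLM_eq_toEuclideanLin, isSymmetric_toEuclideanLin_iff]
    exact hA.posSemidef.1
  rw [(toEuclideanCLM (𝕜 := ℝ) A).norm_eq_iSup_rayleighQuotient hsymm]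
  refine ciSup_le fun x => ?_
  have hquad : 0 ≤ x.ofLp ⬝ᵥ A *ᵥ x.ofLp := by
    simpa using hA.posSemidef.dotProduct_mulVec_nonneg x.ofLp
  have hquad' : x.ofLp ⬝ᵥ A *ᵥ x.ofLp ≤ r * ‖x‖ ^ 2 := by
    have := (le_iff.1 hAr).dotProduct_mulVec_nonneg x.ofLp
    simp only [star_trivial, sub_mulVec, dotProduct_sub, smul_mulVec, one_mulVec,
      dotProduct_smul, smul_eq_mul, sub_nonneg] at this
    rwa [← real_inner_self_eq_norm_sq, EuclideanSpace.inner_eq_star_dotProduct, star_trivial]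
  have hrayleigh : (toEuclideanCLM (𝕜 := ℝ) A).rayleighQuotient x =
      x.ofLp ⬝ᵥ A *ᵥ x.ofLp / ‖x‖ ^ 2 := by
    rw [ContinuousLinearMap.rayleighQuotient, ContinuousLinearMap.reApplyInnerSelf,
      real_inner_comm, inner_toEuclideanCLM]
    rfl
  rw [hrayleigh, abs_of_nonneg (by positivity)]
  exact div_le_of_le_mul₀ (by positivity) hr hquad'

namespace SimpleGraph

variable {V : Type*} [Fintype V] [DecidableEq V] (G : SimpleGraph V) [DecidableRel G.Adj]

theorem degMatrix_add_adjMatrix_toLinearMap₂' (R : Type*) [Field R] [CharZero R] (x : V → R) :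
    toLinearMap₂' R (G.degMatrix R + G.adjMatrix R) x x =
      (∑ i : V, ∑ j : V, if G.Adj i j then (x i + x j) ^ 2 else 0) / 2 := by
  simp_rw [toLinearMap₂'_apply', add_mulVec, dotProduct_add, dotProduct_mulVec_degMatrix,
    dotProduct_mulVec_adjMatrix, ← sum_add_distrib, degree_eq_sum_if_adj, sum_mul, ite_mul,
    one_mul, zero_mul, ← sum_add_distrib, ite_add_ite, add_zero]
  rw [← add_self_div_two (∑ i : V, ∑ j : V, _)]
  conv_lhs => enter [1, 2, 2, i, 2, j]; rw [if_congr (G.adj_comm i j) rfl rfl]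
  conv_lhs => enter [1, 2]; rw [Finset.sum_comm]
  simp_rw [← sum_add_distrib, ite_add_ite]
  congr 2 with i
  congr 2 with j
  ring_nf

theorem posSemidef_degMatrix_add_adjMatrix (R : Type*) [Field R] [LinearOrder R]
    [IsStrictOrderedRing R] [StarRing R] [TrivialStar R] :
    (G.degMatrix R + G.adjMatrix R).PosSemidef := by
  refine .of_dotProduct_mulVec_nonneg ?_ fun x => ?_
  · rw [IsHermitian, conjTranspose_eq_transpose_of_trivial]
    exact (G.isSymm_degMatrix R).add G.isSymm_adjMatrix
  · rw [star_trivial, ← toLinearMap₂'_apply', G.degMatrix_add_adjMatrix_toLinearMap₂']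
    positivity

theorem degMatrix_nonneg : 0 ≤ G.degMatrix ℝ := by
  rw [degMatrix, ← diagonal_zero]
  exact diagonal_le_diagonal fun i => Nat.cast_nonneg _

theorem degMatrix_le : G.degMatrix ℝ ≤ ((Fintype.card V : ℝ) - 1) • 1 := by
  rw [degMatrix, smul_one_eq_diagonal]
  refine diagonal_le_diagonal fun i => ?_
  have : (G.degree i : ℝ) + 1 ≤ Fintype.card V := by exact_mod_cast G.degree_lt_card_verts i
  linarith

variable {m : Type*} [Fintype m] [DecidableEq m]

/-- `D_t` of the paper, with `H` in place of `∇²F` and `single l l 1 = e^l (e^l)ᵀ`. -/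
noncomputable def hessianBlockDiag (l : V) (H : Matrix (V × m) (V × m) ℝ) (μ ε : ℝ) :
    Matrix (V × m) (V × m) ℝ :=
  H + μ⁻¹ • (single l l 1 ⊗ₖ (1 : Matrix m m ℝ)) + (2 / μ) • (G.degMatrix ℝ ⊗ₖ (1 : Matrix m m ℝ))
    + ε • 1

theorem smul_one_le_hessianBlockDiag (l : V) {H : Matrix (V × m) (V × m) ℝ} {μ : ℝ} (ε : ℝ)
    (hμ : 0 < μ) (hH : 0 ≤ H) : ε • 1 ≤ G.hessianBlockDiag l H μ ε := by
  have hE := kronecker_le_kronecker_of_nonneg_right (single_one_nonneg l) (zero_le_one' (Matrix m m ℝ))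
  have hL := kronecker_le_kronecker_of_nonneg_right G.degMatrix_nonneg (zero_le_one' (Matrix m m ℝ))
  rw [zero_kronecker] at hE hL
  rw [hessianBlockDiag, le_add_iff_nonneg_left]
  exact add_nonneg (add_nonneg hH (smul_nonneg (inv_nonneg.2 hμ.le) hE))
    (smul_nonneg (by positivity) hL)

theorem hessianBlockDiag_le (l : V) {H : Matrix (V × m) (V × m) ℝ} {μ Mf : ℝ} (ε : ℝ)
    (hμ : 0 < μ) (hH : H ≤ Mf • 1) :
    G.hessianBlockDiag l H μ ε ≤ (Mf + ε + (1 + 2 * ((Fintype.card V : ℝ) - 1)) / μ) • 1 := by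
  have hE := kronecker_le_kronecker_of_nonneg_right (single_one_le_one l) (zero_le_one' (Matrix m m ℝ))
  have hL := kronecker_le_kronecker_of_nonneg_right G.degMatrix_le (zero_le_one' (Matrix m m ℝ))
  calc G.hessianBlockDiag l H μ ε
      ≤ Mf • 1 + μ⁻¹ • (1 ⊗ₖ 1) + (2 / μ) • ((((Fintype.card V : ℝ) - 1) • 1) ⊗ₖ 1) + ε • 1 := by
        rw [hessianBlockDiag]
        gcongr
    _ = _ := by
        simp only [one_kronecker_one, smul_kronecker, smul_smul, ← add_smul]
        congr 1
        ring

end SimpleGraph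

theorem approx_hessian_norm_bound_general
    (n d : ℕ) (G : SimpleGraph (Fin n)) [DecidableRel G.Adj]
    (l : Fin n) (K : ℕ)
    (μ ε mf Mf : ℝ) (hμ : 0 < μ) (hε : 0 < ε) (hmf : 0 < mf) (hmM : mf ≤ Mf)
    (Q : Fin n → Matrix (Fin d) (Fin d) ℝ)
    (hQlow : ∀ i, (Q i - mf • (1 : Matrix (Fin d) (Fin d) ℝ)).PosSemidef)
    (hQhigh : ∀ i, (Mf • (1 : Matrix (Fin d) (Fin d) ℝ) - Q i).PosSemidef)
    (HessF : Matrix (Fin n × Fin d) (Fin n × Fin d) ℝ)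
    (hHessF : HessF = Matrix.of fun p q => if p.1 = q.1 then Q p.1 p.2 q.2 else 0)
    (Ldia : Matrix (Fin n) (Fin n) ℝ)
    (hLdia : Ldia = Matrix.diagonal (fun i => (G.degree i : ℝ)))
    (Loff : Matrix (Fin n) (Fin n) ℝ) (hLoff : Loff = G.lapMatrix ℝ - Ldia)
    (D N : Matrix (Fin n × Fin d) (Fin n × Fin d) ℝ)
    (hDdef : D = HessF
      + μ⁻¹ • (Matrix.single l l 1 ⊗ₖ (1 : Matrix (Fin d) (Fin d) ℝ))
      + (2 / μ) • (Ldia ⊗ₖ (1 : Matrix (Fin d) (Fin d) ℝ))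
      + ε • (1 : Matrix (Fin n × Fin d) (Fin n × Fin d) ℝ))
    (hNdef : N = μ⁻¹ • ((Ldia - Loff) ⊗ₖ (1 : Matrix (Fin d) (Fin d) ℝ)))
    (hD : D.PosSemidef)
    (Hhatinv : Matrix (Fin n × Fin d) (Fin n × Fin d) ℝ)
    (hHhatinv : Hhatinv = (hD.sqrt)⁻¹ *
      (∑ i ∈ Finset.range (K + 1), ((hD.sqrt)⁻¹ * N * (hD.sqrt)⁻¹) ^ i) * (hD.sqrt)⁻¹) :
    ‖toEuclideanCLM (𝕜 := ℝ) Hhatinv⁻¹‖ ≤ Mf + ε + (1 + 2 * ((n : ℝ) - 1)) / μ := by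
  replace hLdia : Ldia = G.degMatrix ℝ := hLdia
  have hHess : mf • 1 ≤ HessF ∧ HessF ≤ Mf • 1 := by
    simp only [hHessF, of_ite_fst_eq_sum_single_kronecker, ← sum_single_kronecker_smul_one]
    exact ⟨sum_single_kronecker_mono hQlow, sum_single_kronecker_mono hQhigh⟩
  have hDeq : D = G.hessianBlockDiag l HessF μ ε := by rw [hDdef, hLdia]; rfl
  have hDlo : ε • 1 ≤ D := by
    rw [hDeq]
    exact G.smul_one_le_hessianBlockDiag l ε hμ ((smul_nonneg hmf.le zero_le_one).trans hHess.1)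
  have hDhi : D ≤ (Mf + ε + (1 + 2 * ((n : ℝ) - 1)) / μ) • 1 := by
    simpa [hDeq] using G.hessianBlockDiag_le l ε hμ hHess.2
  have hN : 0 ≤ N := by
    rw [hNdef, hLoff, hLdia, SimpleGraph.lapMatrix, sub_sub_cancel_left, sub_neg_eq_add]
    exact smul_nonneg (inv_nonneg.2 hμ.le)
      ((G.posSemidef_degMatrix_add_adjMatrix ℝ).kronecker PosSemidef.one).nonneg
  have hc : 0 ≤ Mf + ε + (1 + 2 * ((n : ℝ) - 1)) / μ := by
    have : (1 : ℝ) ≤ n := by exact_mod_cast l.pos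
    have : 0 ≤ (1 + 2 * ((n : ℝ) - 1)) / μ := div_nonneg (by linarith) hμ.le
    linarith
  have hS : 0 ≤ (hD.sqrt)⁻¹ * N * (hD.sqrt)⁻¹ :=
    hD.isHermitian_sqrt.inv.isSelfAdjoint.conjugate_nonneg hN
  obtain ⟨h0, hle⟩ := inv_conj_inv_mem_Icc hD.isHermitian_sqrt
    (hD.isUnit_det_sqrt (posDef_of_smul_one_le hε hDlo)) (one_le_sum_range_pow hS K)
  rw [hHhatinv]
  exact norm_toEuclideanCLM_le_of_nonneg_of_le hc h0 ((hle.trans_eq hD.sqrt_mul_self).trans hDhi)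

/-- Bound on the approximate Hessian: with D_t, N as in Lemma 1 and
Ĥ_t(K)⁻¹ = D_t^{-1/2} ∑_{i=0}^K (D_t^{-1/2} N D_t^{-1/2})^i D_t^{-1/2},
one has ‖Ĥ_t(K)‖ ≤ M_f + ε + (1 + 2(n−1))/μ. -/
theorem approx_hessian_norm_bound
    (n d : ℕ) (hn : 2 ≤ n) (G : SimpleGraph (Fin n)) [DecidableRel G.Adj]
    (hG : G.Connected) (l : Fin n) (K : ℕ)
    (μ ε mf Mf : ℝ) (hμ : 0 < μ) (hε : 0 < ε) (hmf : 0 < mf) (hmM : mf ≤ Mf)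
    (Q : Fin n → Matrix (Fin d) (Fin d) ℝ)
    (hQsym : ∀ i, (Q i).IsHermitian)
    (hQlow : ∀ i, (Q i - mf • (1 : Matrix (Fin d) (Fin d) ℝ)).PosSemidef)
    (hQhigh : ∀ i, (Mf • (1 : Matrix (Fin d) (Fin d) ℝ) - Q i).PosSemidef)
    (HessF : Matrix (Fin n × Fin d) (Fin n × Fin d) ℝ)
    (hHessF : HessF = Matrix.of fun p q => if p.1 = q.1 then Q p.1 p.2 q.2 else 0)
    (Ldia : Matrix (Fin n) (Fin n) ℝ)
    (hLdia : Ldia = Matrix.diagonal (fun i => (G.degree i : ℝ)))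
    (Loff : Matrix (Fin n) (Fin n) ℝ) (hLoff : Loff = G.lapMatrix ℝ - Ldia)
    (D N : Matrix (Fin n × Fin d) (Fin n × Fin d) ℝ)
    (hDdef : D = HessF
      + μ⁻¹ • (Matrix.single l l 1 ⊗ₖ (1 : Matrix (Fin d) (Fin d) ℝ))
      + (2 / μ) • (Ldia ⊗ₖ (1 : Matrix (Fin d) (Fin d) ℝ))
      + ε • (1 : Matrix (Fin n × Fin d) (Fin n × Fin d) ℝ))
    (hNdef : N = μ⁻¹ • ((Ldia - Loff) ⊗ₖ (1 : Matrix (Fin d) (Fin d) ℝ)))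
    (hD : D.PosSemidef)
    (Hhatinv : Matrix (Fin n × Fin d) (Fin n × Fin d) ℝ)
    (hHhatinv : Hhatinv = (hD.sqrt)⁻¹ *
      (∑ i ∈ Finset.range (K + 1), ((hD.sqrt)⁻¹ * N * (hD.sqrt)⁻¹) ^ i) * (hD.sqrt)⁻¹) :
    ‖toEuclideanCLM (𝕜 := ℝ) Hhatinv⁻¹‖ ≤ Mf + ε + (1 + 2 * ((n : ℝ) - 1)) / μ :=
  approx_hessian_norm_bound_general n d G l K μ ε mf Mf hμ hε hmf hmM Q hQlow hQhigh HessF hHessF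
    Ldia hLdia Loff hLoff D N hDdef hNdef hD Hhatinv hHhatinv
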